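/- arXiv:nlin/0511012 — 2 statements merged into one kernel-verified Lean document; each statement's English description precedes it below -/
import Mathlib

section
/- For every smooth solution (w,u,v) of the dB system, the triple φ₅ = (w_x·(v + 3w²) + u_x·u + v_x·w, u_x·v + v_x·u, w_x·(−u² − 3w³) − 4u_x·u·w + v_x·(v − w²)) is a symmetry characteristic along (w,u,v). -/
/-- Partial derivative with respect to the first variable `x`. -/
noncomputable def pdx (f : ℝ → ℝ → ℝ) (x t : ℝ) : ℝ := deriv (fun x' => f x' t) x

/-- Partial derivative with respect to the second variable `t`. -/
noncomputable def pdt (f : ℝ → ℝ → ℝ) (x t : ℝ) : ℝ := deriv (fun t' => f x t') t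

/-- A function of two real variables is smooth. -/
def Smooth2 (f : ℝ → ℝ → ℝ) : Prop := ContDiff ℝ (⊤ : ℕ∞) (Function.uncurry f)

/-- The dispersionless Boussinesq (dB) system:
`w_t = u_x`, `u_t = w·w_x + v_x`, `v_t = −u·w_x − 3w·u_x`. -/
def IsDBSolution (w u v : ℝ → ℝ → ℝ) : Prop :=
  (∀ x t, pdt w x t = pdx u x t) ∧
  (∀ x t, pdt u x t = w x t * pdx w x t + pdx v x t) ∧
  (∀ x t, pdt v x t = -(u x t * pdx w x t) - 3 * w x t * pdx u x t)

/-- A symmetry characteristic of the dB system along the solution `(w,u,v)`: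
a solution of the linearized system. -/
def IsSymmetryChar (w u v φw φu φv : ℝ → ℝ → ℝ) : Prop :=
  (∀ x t, pdt φw x t = pdx φu x t) ∧
  (∀ x t, pdt φu x t = w x t * pdx φw x t + pdx w x t * φw x t + pdx φv x t) ∧
  (∀ x t, pdt φv x t = -(u x t * pdx φw x t) - 3 * pdx u x t * φw x t
      - 3 * w x t * pdx φu x t - pdx w x t * φu x t)

/-- A cosymmetry characteristic of the dB system along the solution `(w,u,v)`:
a solution of the adjoint linearized system. -/
def IsCosymmetryChar (w u _v ψw ψu ψv : ℝ → ℝ → ℝ) : Prop :=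
  (∀ x t, pdt ψw x t = w x t * pdx ψu x t - u x t * pdx ψv x t
      + 2 * pdx u x t * ψv x t) ∧
  (∀ x t, pdt ψu x t = pdx ψw x t - 3 * w x t * pdx ψv x t - 2 * pdx w x t * ψv x t) ∧
  (∀ x t, pdt ψv x t = pdx ψu x t)

namespace DBaux

variable {f : ℝ → ℝ → ℝ}

lemma pdx_eq_fderiv (hf : Smooth2 f) (x t : ℝ) :
    pdx f x t = fderiv ℝ (Function.uncurry f) (x, t) (1, 0) := by
  have hγ : HasDerivAt (fun x' : ℝ => (x', t)) ((1 : ℝ), (0 : ℝ)) x :=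
    (hasDerivAt_id x).prodMk (hasDerivAt_const x t)
  have hF := ((hf.differentiable (by simp)).differentiableAt (x := (x, t))).hasFDerivAt
  have h : HasDerivAt (fun x' => f x' t) (fderiv ℝ (Function.uncurry f) (x, t) (1, 0)) x :=
    (hF.comp_hasDerivAt x hγ : HasDerivAt (Function.uncurry f ∘ fun x' => (x', t)) _ x)
  show deriv (fun x' => f x' t) x = _
  exact h.deriv

lemma pdt_eq_fderiv (hf : Smooth2 f) (x t : ℝ) :
    pdt f x t = fderiv ℝ (Function.uncurry f) (x, t) (0, 1) := by
  have hγ : HasDerivAt (fun t' : ℝ => (x, t')) ((0 : ℝ), (1 : ℝ)) t :=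
    (hasDerivAt_const t x).prodMk (hasDerivAt_id t)
  have hF := ((hf.differentiable (by simp)).differentiableAt (x := (x, t))).hasFDerivAt
  have h : HasDerivAt (fun t' => f x t') (fderiv ℝ (Function.uncurry f) (x, t) (0, 1)) t :=
    hF.comp_hasDerivAt t hγ
  show deriv (fun t' => f x t') t = _
  exact h.deriv

lemma hasDerivAt_pdx (hf : Smooth2 f) (x t : ℝ) :
    HasDerivAt (fun x' => f x' t) (pdx f x t) x := by
  have hγ : HasDerivAt (fun x' : ℝ => (x', t)) ((1 : ℝ), (0 : ℝ)) x :=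
    (hasDerivAt_id x).prodMk (hasDerivAt_const x t)
  have hF := ((hf.differentiable (by simp)).differentiableAt (x := (x, t))).hasFDerivAt
  have h : HasDerivAt (fun x' => f x' t) (fderiv ℝ (Function.uncurry f) (x, t) (1, 0)) x :=
    (hF.comp_hasDerivAt x hγ : HasDerivAt (Function.uncurry f ∘ fun x' => (x', t)) _ x)
  exact (pdx_eq_fderiv hf x t) ▸ h

lemma hasDerivAt_pdt (hf : Smooth2 f) (x t : ℝ) :
    HasDerivAt (fun t' => f x t') (pdt f x t) t := by
  have hγ : HasDerivAt (fun t' : ℝ => (x, t')) ((0 : ℝ), (1 : ℝ)) t :=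
    (hasDerivAt_const t x).prodMk (hasDerivAt_id t)
  have hF := ((hf.differentiable (by simp)).differentiableAt (x := (x, t))).hasFDerivAt
  have h : HasDerivAt (fun t' => f x t') (fderiv ℝ (Function.uncurry f) (x, t) (0, 1)) t :=
    hF.comp_hasDerivAt t hγ
  exact (pdt_eq_fderiv hf x t) ▸ h



lemma uncurry_pdx (hf : Smooth2 f) :
    Function.uncurry (pdx f) = fun p => fderiv ℝ (Function.uncurry f) p (1, 0) := by
  funext p
  exact pdx_eq_fderiv hf p.1 p.2

lemma uncurry_pdt (hf : Smooth2 f) :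
    Function.uncurry (pdt f) = fun p => fderiv ℝ (Function.uncurry f) p (0, 1) := by
  funext p
  exact pdt_eq_fderiv hf p.1 p.2

lemma smooth_pdx (hf : Smooth2 f) : Smooth2 (pdx f) := by
  rw [Smooth2, uncurry_pdx hf]
  exact (hf.fderiv_right (by simp)).clm_apply contDiff_const

lemma smooth_pdt (hf : Smooth2 f) : Smooth2 (pdt f) := by
  rw [Smooth2, uncurry_pdt hf]
  exact (hf.fderiv_right (by simp)).clm_apply contDiff_const

lemma clairaut (hf : Smooth2 f) (x t : ℝ) :
    pdt (pdx f) x t = pdx (pdt f) x t := by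
  have hdF : DifferentiableAt ℝ (fderiv ℝ (Function.uncurry f)) (x, t) :=
    ((hf.fderiv_right (m := 1) (by exact WithTop.coe_le_coe.mpr le_top)).differentiable one_ne_zero).differentiableAt
  have key : ∀ a b : ℝ × ℝ,
      fderiv ℝ (fun p => fderiv ℝ (Function.uncurry f) p a) (x, t) b
        = fderiv ℝ (fderiv ℝ (Function.uncurry f)) (x, t) b a := by
    intro a b
    rw [fderiv_clm_apply hdF (differentiableAt_const a)]
    simp
  have hsymm := ((hf.contDiffAt (x := ((x, t) : ℝ × ℝ))).of_le (m := 2) (by exact WithTop.coe_le_coe.mpr le_top)).isSymmSndFDerivAt (by simp)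
  rw [pdt_eq_fderiv (smooth_pdx hf), pdx_eq_fderiv (smooth_pdt hf),
    uncurry_pdx hf, uncurry_pdt hf, key, key]
  exact hsymm _ _


lemma pdt_eq (f : ℝ → ℝ → ℝ) {x t d : ℝ} (h : HasDerivAt (fun t' => f x t') d t) :
    pdt f x t = d := by
  show deriv (fun t' => f x t') t = d
  exact h.deriv

lemma pdx_eq (f : ℝ → ℝ → ℝ) {x t d : ℝ} (h : HasDerivAt (fun x' => f x' t) d x) :
    pdx f x t = d := by
  show deriv (fun x' => f x' t) x = d
  exact h.deriv

end DBaux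

open DBaux in
/-- `φ₅` is a symmetry characteristic along every smooth solution
of the dB system. -/
theorem dB_symmetry_phi5 (w u v : ℝ → ℝ → ℝ)
    (hw : Smooth2 w) (hu : Smooth2 u) (hv : Smooth2 v)
    (hsol : IsDBSolution w u v) :
    IsSymmetryChar w u v
      (fun x t => pdx w x t * (v x t + 3 * (w x t) ^ 2) + pdx u x t * u x t
        + pdx v x t * w x t)
      (fun x t => pdx u x t * v x t + pdx v x t * u x t)
      (fun x t => pdx w x t * (-(u x t) ^ 2 - 3 * (w x t) ^ 3)
        - 4 * pdx u x t * u x t * w x t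
        + pdx v x t * (v x t - (w x t) ^ 2)) := by
  obtain ⟨e1, e2, e3⟩ := hsol
  have hwx : Smooth2 (pdx w) := smooth_pdx hw
  have hux : Smooth2 (pdx u) := smooth_pdx hu
  have hvx : Smooth2 (pdx v) := smooth_pdx hv
  have hptw : pdt w = pdx u := funext fun a => funext fun b => e1 a b
  have hptu : pdt u = fun x t => w x t * pdx w x t + pdx v x t :=
    funext fun a => funext fun b => e2 a b
  have hptv : pdt v = fun x t => -(u x t * pdx w x t) - 3 * w x t * pdx u x t :=
    funext fun a => funext fun b => e3 a b
  have c1 : ∀ x t, pdt (pdx w) x t = pdx (pdx u) x t := by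
    intro x t
    rw [clairaut hw x t, hptw]
  have c2 : ∀ x t, pdt (pdx u) x t
      = pdx w x t * pdx w x t + w x t * pdx (pdx w) x t + pdx (pdx v) x t := by
    intro x t
    rw [clairaut hu x t, hptu]
    exact (pdx_eq (fun x t => w x t * pdx w x t + pdx v x t)
      (((hasDerivAt_pdx hw x t).mul (hasDerivAt_pdx hwx x t)).add
      (hasDerivAt_pdx hvx x t))).trans (by ring)
  have c3 : ∀ x t, pdt (pdx v) x t
      = -(pdx u x t * pdx w x t) - u x t * pdx (pdx w) x t
        - 3 * pdx w x t * pdx u x t - 3 * w x t * pdx (pdx u) x t := by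
    intro x t
    rw [clairaut hv x t, hptv]
    exact (pdx_eq (fun x t => -(u x t * pdx w x t) - 3 * w x t * pdx u x t)
      ((((hasDerivAt_pdx hu x t).mul (hasDerivAt_pdx hwx x t)).neg).sub
      (((hasDerivAt_pdx hw x t).const_mul 3).mul (hasDerivAt_pdx hux x t)))).trans (by ring)
  refine ⟨fun x t => ?_, fun x t => ?_, fun x t => ?_⟩
  all_goals
    beta_reduce
    have Lw := pdt_eq
        (fun x t => pdx w x t * (v x t + 3 * (w x t) ^ 2) + pdx u x t * u x t
          + pdx v x t * w x t)
        ((((hasDerivAt_pdt hwx x t).mul ((hasDerivAt_pdt hv x t).add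
        (((hasDerivAt_pdt hw x t).pow 2).const_mul 3))).add
        ((hasDerivAt_pdt hux x t).mul (hasDerivAt_pdt hu x t))).add
        ((hasDerivAt_pdt hvx x t).mul (hasDerivAt_pdt hw x t)))
    have Lu := pdt_eq
        (fun x t => pdx u x t * v x t + pdx v x t * u x t)
        (((hasDerivAt_pdt hux x t).mul (hasDerivAt_pdt hv x t)).add
        ((hasDerivAt_pdt hvx x t).mul (hasDerivAt_pdt hu x t)))
    have Lv := pdt_eq
        (fun x t => pdx w x t * (-(u x t) ^ 2 - 3 * (w x t) ^ 3)
          - 4 * pdx u x t * u x t * w x t + pdx v x t * (v x t - (w x t) ^ 2))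
        ((((hasDerivAt_pdt hwx x t).mul
        ((((hasDerivAt_pdt hu x t).pow 2).neg).sub
          (((hasDerivAt_pdt hw x t).pow 3).const_mul 3))).sub
        ((((hasDerivAt_pdt hux x t).const_mul 4).mul (hasDerivAt_pdt hu x t)).mul
          (hasDerivAt_pdt hw x t))).add
        ((hasDerivAt_pdt hvx x t).mul ((hasDerivAt_pdt hv x t).sub
          ((hasDerivAt_pdt hw x t).pow 2))))
    have Rw := pdx_eq
        (fun x t => pdx w x t * (v x t + 3 * (w x t) ^ 2) + pdx u x t * u x t
          + pdx v x t * w x t)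
        ((((hasDerivAt_pdx hwx x t).mul ((hasDerivAt_pdx hv x t).add
        (((hasDerivAt_pdx hw x t).pow 2).const_mul 3))).add
        ((hasDerivAt_pdx hux x t).mul (hasDerivAt_pdx hu x t))).add
        ((hasDerivAt_pdx hvx x t).mul (hasDerivAt_pdx hw x t)))
    have Ru := pdx_eq
        (fun x t => pdx u x t * v x t + pdx v x t * u x t)
        (((hasDerivAt_pdx hux x t).mul (hasDerivAt_pdx hv x t)).add
        ((hasDerivAt_pdx hvx x t).mul (hasDerivAt_pdx hu x t)))
    have Rv := pdx_eq
        (fun x t => pdx w x t * (-(u x t) ^ 2 - 3 * (w x t) ^ 3)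
          - 4 * pdx u x t * u x t * w x t + pdx v x t * (v x t - (w x t) ^ 2))
        ((((hasDerivAt_pdx hwx x t).mul
        ((((hasDerivAt_pdx hu x t).pow 2).neg).sub
          (((hasDerivAt_pdx hw x t).pow 3).const_mul 3))).sub
        ((((hasDerivAt_pdx hux x t).const_mul 4).mul (hasDerivAt_pdx hu x t)).mul
          (hasDerivAt_pdx hw x t))).add
        ((hasDerivAt_pdx hvx x t).mul ((hasDerivAt_pdx hv x t).sub
          ((hasDerivAt_pdx hw x t).pow 2))))
    simp only [Lw, Lu, Lv, Rw, Ru, Rv, c1, c2, c3, e1, e2, e3, Pi.add_apply, Pi.sub_apply,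
      Pi.neg_apply, Pi.mul_apply, Pi.pow_apply]
    push_cast
    ring
end

section
/- Let (w,u,v) be a smooth solution of the dB system and let p₁, p₂, p₃ be smooth potentials with ∂_x p₁ = w, ∂_t p₁ = u; ∂_x p₂ = u, ∂_t p₂ = (2v + w²)/2; ∂_x p₃ = v + w², ∂_t p₃ = −u·w. Then the nonlocal triple φ₄,₁ with components φ^w = −20p₃·w_x − 12p₂·u_x − 6p₁·(2w_x·w + v_x) + 9u² + 16vw + 16w³, φ^u = −20p₃·u_x − 12p₂·(w_x·w + v_x) + 6p₁·(w_x·u + u_x·w) + 8u·(3v + w²), φ^v = −20p₃·v_x + 12p₂·(w_x·u + 3u_x·w) + 6p₁·(3w_x·w² + u_x·u + 2v_x·w) − 39u²w + 16v² − 12w⁴ is a symmetry characteristic along (w,u,v). -/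
section Helpers
open Function

lemma Smooth2.hasDerivAt_x {f : ℝ → ℝ → ℝ} (hf : Smooth2 f) (x t : ℝ) :
    HasDerivAt (fun x' => f x' t) (pdx f x t) x := by
  have hdiff : Differentiable ℝ (fun x' => f x' t) :=
    (hf.differentiable (by simp)).comp (differentiable_id.prodMk (differentiable_const t))
  exact (hdiff x).hasDerivAt

lemma Smooth2.hasDerivAt_t {f : ℝ → ℝ → ℝ} (hf : Smooth2 f) (x t : ℝ) :
    HasDerivAt (fun t' => f x t') (pdt f x t) t := by
  have hdiff : Differentiable ℝ (fun t' => f x t') :=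
    (hf.differentiable (by simp)).comp ((differentiable_const x).prodMk differentiable_id)
  exact (hdiff t).hasDerivAt

lemma pdx_eq_fderiv {f : ℝ → ℝ → ℝ} (hf : Smooth2 f) (x t : ℝ) :
    pdx f x t = fderiv ℝ (uncurry f) (x, t) (1, 0) := by
  have h1 : HasFDerivAt (fun x' : ℝ => (x', t)) ((ContinuousLinearMap.id ℝ ℝ).prod 0) x :=
    (hasFDerivAt_id x).prodMk (hasFDerivAt_const t x)
  have h2 : HasFDerivAt (uncurry f) (fderiv ℝ (uncurry f) (x, t)) (x, t) :=
    (hf.differentiable (by simp) (x, t)).hasFDerivAt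
  have h3 := (h2.comp x h1).hasDerivAt
  have h4 : HasDerivAt (fun x' => f x' t) (fderiv ℝ (uncurry f) (x, t) (1, 0)) x := by
    simpa [Function.comp_def] using h3
  rw [pdx]; exact h4.deriv

lemma pdt_eq_fderiv {f : ℝ → ℝ → ℝ} (hf : Smooth2 f) (x t : ℝ) :
    pdt f x t = fderiv ℝ (uncurry f) (x, t) (0, 1) := by
  have h1 : HasFDerivAt (fun t' : ℝ => (x, t')) ((0 : ℝ →L[ℝ] ℝ).prod (ContinuousLinearMap.id ℝ ℝ)) t :=
    (hasFDerivAt_const x t).prodMk (hasFDerivAt_id t)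
  have h2 : HasFDerivAt (uncurry f) (fderiv ℝ (uncurry f) (x, t)) (x, t) :=
    (hf.differentiable (by simp) (x, t)).hasFDerivAt
  have h3 := (h2.comp t h1).hasDerivAt
  have h4 : HasDerivAt (fun t' => f x t') (fderiv ℝ (uncurry f) (x, t) (0, 1)) t := by
    simpa [Function.comp_def] using h3
  rw [pdt]; exact h4.deriv

lemma Smooth2.fderiv_smooth {f : ℝ → ℝ → ℝ} (hf : Smooth2 f) :
    ContDiff ℝ (⊤ : ℕ∞) (fderiv ℝ (uncurry f)) :=
  hf.fderiv_right (by simp)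

lemma Smooth2.pdx_smooth {f : ℝ → ℝ → ℝ} (hf : Smooth2 f) : Smooth2 (pdx f) := by
  have : uncurry (pdx f) = fun p : ℝ × ℝ => fderiv ℝ (uncurry f) p (1, 0) := by
    funext p
    exact pdx_eq_fderiv hf p.1 p.2
  rw [Smooth2, this]
  exact hf.fderiv_smooth.clm_apply contDiff_const

lemma Smooth2.pdt_smooth {f : ℝ → ℝ → ℝ} (hf : Smooth2 f) : Smooth2 (pdt f) := by
  have : uncurry (pdt f) = fun p : ℝ × ℝ => fderiv ℝ (uncurry f) p (0, 1) := by
    funext p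
    exact pdt_eq_fderiv hf p.1 p.2
  rw [Smooth2, this]
  exact hf.fderiv_smooth.clm_apply contDiff_const

lemma Smooth2.mixed {f : ℝ → ℝ → ℝ} (hf : Smooth2 f) (x t : ℝ) :
    pdt (pdx f) x t = pdx (pdt f) x t := by
  set F := uncurry f
  have hF : Differentiable ℝ F := hf.differentiable (by simp)
  have hF' : Differentiable ℝ (fderiv ℝ F) := hf.fderiv_smooth.differentiable (by simp)
  have hsymm : ∀ vv ww : ℝ × ℝ,
      fderiv ℝ (fderiv ℝ F) (x, t) vv ww = fderiv ℝ (fderiv ℝ F) (x, t) ww vv :=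
    second_derivative_symmetric (fun y => (hF y).hasFDerivAt) ((hF' (x, t)).hasFDerivAt)
  -- pdt (pdx f) x t
  have e1 : pdt (pdx f) x t = fderiv ℝ (fderiv ℝ F) (x, t) (0, 1) (1, 0) := by
    have hmap : HasDerivAt (fun t' => fderiv ℝ F (x, t'))
        (fderiv ℝ (fderiv ℝ F) (x, t) (0, 1)) t := by
      have h1 : HasFDerivAt (fun t' : ℝ => (x, t'))
          ((0 : ℝ →L[ℝ] ℝ).prod (ContinuousLinearMap.id ℝ ℝ)) t :=
        (hasFDerivAt_const x t).prodMk (hasFDerivAt_id t)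
      have h2 := ((hF' (x, t)).hasFDerivAt.comp t h1).hasDerivAt
      simpa [Function.comp_def] using h2
    have happ := hmap.clm_apply (hasDerivAt_const t ((1 : ℝ), (0 : ℝ)))
    have : pdt (pdx f) x t = deriv (fun t' => fderiv ℝ F (x, t') (1, 0)) t := by
      have : (fun t' => pdx f x t') = fun t' => fderiv ℝ F (x, t') (1, 0) := by
        funext t'
        exact pdx_eq_fderiv hf x t'
      rw [pdt, this]
    rw [this, happ.deriv]
    simp
  have e2 : pdx (pdt f) x t = fderiv ℝ (fderiv ℝ F) (x, t) (1, 0) (0, 1) := by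
    have hmap : HasDerivAt (fun x' => fderiv ℝ F (x', t))
        (fderiv ℝ (fderiv ℝ F) (x, t) (1, 0)) x := by
      have h1 : HasFDerivAt (fun x' : ℝ => (x', t))
          ((ContinuousLinearMap.id ℝ ℝ).prod 0) x :=
        (hasFDerivAt_id x).prodMk (hasFDerivAt_const t x)
      have h2 := ((hF' (x, t)).hasFDerivAt.comp x h1).hasDerivAt
      simpa [Function.comp_def] using h2
    have happ := hmap.clm_apply (hasDerivAt_const x ((0 : ℝ), (1 : ℝ)))
    have : pdx (pdt f) x t = deriv (fun x' => fderiv ℝ F (x', t) (0, 1)) x := by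
      have : (fun x' => pdt f x' t) = fun x' => fderiv ℝ F (x', t) (0, 1) := by
        funext x'
        exact pdt_eq_fderiv hf x' t
      rw [pdx, this]
    rw [this, happ.deriv]
    simp
  rw [e1, e2, hsymm]

end Helpers

lemma dB_mixed1 {w u v : ℝ → ℝ → ℝ} (hw : Smooth2 w) (hu : Smooth2 u)
    (hsol : IsDBSolution w u v) :
    ∀ x t, pdt (pdx w) x t = pdx (pdx u) x t := by
  intro x t
  rw [hw.mixed]
  show deriv (fun x' => pdt w x' t) x = _
  rw [show (fun x' => pdt w x' t) = fun x' => pdx u x' t from funext fun a => hsol.1 a t]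
  rfl

lemma dB_mixed2 {w u v : ℝ → ℝ → ℝ} (hw : Smooth2 w) (hu : Smooth2 u) (hv : Smooth2 v)
    (hsol : IsDBSolution w u v) :
    ∀ x t, pdt (pdx u) x t
      = pdx w x t * pdx w x t + w x t * pdx (pdx w) x t + pdx (pdx v) x t := by
  intro x t
  rw [hu.mixed]
  show deriv (fun x' => pdt u x' t) x = _
  rw [show (fun x' => pdt u x' t) = fun x' => w x' t * pdx w x' t + pdx v x' t from
    funext fun a => hsol.2.1 a t]
  exact (((hw.hasDerivAt_x x t).mul ((hw.pdx_smooth).hasDerivAt_x x t)).add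
    ((hv.pdx_smooth).hasDerivAt_x x t)).deriv

lemma dB_mixed3 {w u v : ℝ → ℝ → ℝ} (hw : Smooth2 w) (hu : Smooth2 u) (hv : Smooth2 v)
    (hsol : IsDBSolution w u v) :
    ∀ x t, pdt (pdx v) x t
      = -(pdx u x t * pdx w x t + u x t * pdx (pdx w) x t)
        - (3 * pdx w x t * pdx u x t + 3 * w x t * pdx (pdx u) x t) := by
  intro x t
  rw [hv.mixed]
  show deriv (fun x' => pdt v x' t) x = _
  rw [show (fun x' => pdt v x' t) = fun x' => -(u x' t * pdx w x' t) - 3 * w x' t * pdx u x' t from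
    funext fun a => hsol.2.2 a t]
  exact ((((hu.hasDerivAt_x x t).mul ((hw.pdx_smooth).hasDerivAt_x x t)).neg).sub
    (((hw.hasDerivAt_x x t).const_mul 3).mul ((hu.pdx_smooth).hasDerivAt_x x t))).deriv

lemma pdx_of_hasDerivAt {g : ℝ → ℝ → ℝ} {x t d : ℝ}
    (h : HasDerivAt (fun x' => g x' t) d x) : pdx g x t = d := h.deriv

lemma pdt_of_hasDerivAt {g : ℝ → ℝ → ℝ} {x t d : ℝ}
    (h : HasDerivAt (fun t' => g x t') d t) : pdt g x t = d := h.deriv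

/-- the nonlocal triple `φ₄,₁` built from the potentials
`p₁, p₂, p₃` is a symmetry characteristic along every smooth solution of
the dB system. -/
theorem dB_nonlocal_symmetry_phi41 (w u v p1 p2 p3 : ℝ → ℝ → ℝ)
    (hw : Smooth2 w) (hu : Smooth2 u) (hv : Smooth2 v)
    (hp1 : Smooth2 p1) (hp2 : Smooth2 p2) (hp3 : Smooth2 p3)
    (hsol : IsDBSolution w u v)
    (hp1x : ∀ x t, pdx p1 x t = w x t) (hp1t : ∀ x t, pdt p1 x t = u x t)
    (hp2x : ∀ x t, pdx p2 x t = u x t)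
    (hp2t : ∀ x t, pdt p2 x t = (2 * v x t + (w x t) ^ 2) / 2)
    (hp3x : ∀ x t, pdx p3 x t = v x t + (w x t) ^ 2)
    (hp3t : ∀ x t, pdt p3 x t = -(u x t * w x t)) :
    IsSymmetryChar w u v
      (fun x t => -20 * p3 x t * pdx w x t - 12 * p2 x t * pdx u x t
        - 6 * p1 x t * (2 * pdx w x t * w x t + pdx v x t)
        + 9 * (u x t) ^ 2 + 16 * v x t * w x t + 16 * (w x t) ^ 3)
      (fun x t => -20 * p3 x t * pdx u x t
        - 12 * p2 x t * (pdx w x t * w x t + pdx v x t)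
        + 6 * p1 x t * (pdx w x t * u x t + pdx u x t * w x t)
        + 8 * u x t * (3 * v x t + (w x t) ^ 2))
      (fun x t => -20 * p3 x t * pdx v x t
        + 12 * p2 x t * (pdx w x t * u x t + 3 * pdx u x t * w x t)
        + 6 * p1 x t * (3 * pdx w x t * (w x t) ^ 2 + pdx u x t * u x t
          + 2 * pdx v x t * w x t)
        - 39 * (u x t) ^ 2 * w x t + 16 * (v x t) ^ 2 - 12 * (w x t) ^ 4) := by
  refine ⟨fun x t => ?_, fun x t => ?_, fun x t => ?_⟩
  · -- equation 1
    have Tw := hw.hasDerivAt_t x t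
    have Tu := hu.hasDerivAt_t x t
    have Tv := hv.hasDerivAt_t x t
    have Tp1 := hp1.hasDerivAt_t x t
    have Tp2 := hp2.hasDerivAt_t x t
    have Tp3 := hp3.hasDerivAt_t x t
    have Twx := (hw.pdx_smooth).hasDerivAt_t x t
    have Tux := (hu.pdx_smooth).hasDerivAt_t x t
    have Tvx := (hv.pdx_smooth).hasDerivAt_t x t
    have Xw := hw.hasDerivAt_x x t
    have Xu := hu.hasDerivAt_x x t
    have Xv := hv.hasDerivAt_x x t
    have Xp1 := hp1.hasDerivAt_x x t
    have Xp2 := hp2.hasDerivAt_x x t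
    have Xp3 := hp3.hasDerivAt_x x t
    have Xwx := (hw.pdx_smooth).hasDerivAt_x x t
    have Xux := (hu.pdx_smooth).hasDerivAt_x x t
    have Xvx := (hv.pdx_smooth).hasDerivAt_x x t
    have m1 := dB_mixed1 hw hu hsol
    have m2 := dB_mixed2 hw hu hv hsol
    have m3 := dB_mixed3 hw hu hv hsol
    have hL := ((((((Tp3.const_mul (-20:ℝ)).mul Twx).sub ((Tp2.const_mul 12).mul Tux)).sub ((Tp1.const_mul 6).mul (((Twx.const_mul 2).mul Tw).add Tvx))).add ((Tu.pow 2).const_mul 9)).add ((Tv.const_mul 16).mul Tw)).add ((Tw.pow 3).const_mul 16)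
    have hR := ((((Xp3.const_mul (-20:ℝ)).mul Xux).sub ((Xp2.const_mul 12).mul ((Xwx.mul Xw).add Xvx))).add ((Xp1.const_mul 6).mul ((Xwx.mul Xu).add (Xux.mul Xw)))).add ((Xu.const_mul 8).mul ((Xv.const_mul 3).add (Xw.pow 2)))
    refine (pdt_of_hasDerivAt (x := x) hL).trans
      (Eq.trans ?_ (pdx_of_hasDerivAt (t := t) hR).symm)
    simp only [Pi.add_apply, Pi.sub_apply, Pi.mul_apply, Pi.pow_apply, Pi.neg_apply]
    simp only [m1, m2, m3, hsol.1, hsol.2.1, hsol.2.2, hp1t, hp2t, hp3t, hp1x, hp2x, hp3x]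
    push_cast
    ring
  · -- equation 2
    have Tw := hw.hasDerivAt_t x t
    have Tu := hu.hasDerivAt_t x t
    have Tv := hv.hasDerivAt_t x t
    have Tp1 := hp1.hasDerivAt_t x t
    have Tp2 := hp2.hasDerivAt_t x t
    have Tp3 := hp3.hasDerivAt_t x t
    have Twx := (hw.pdx_smooth).hasDerivAt_t x t
    have Tux := (hu.pdx_smooth).hasDerivAt_t x t
    have Tvx := (hv.pdx_smooth).hasDerivAt_t x t
    have Xw := hw.hasDerivAt_x x t
    have Xu := hu.hasDerivAt_x x t
    have Xv := hv.hasDerivAt_x x t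
    have Xp1 := hp1.hasDerivAt_x x t
    have Xp2 := hp2.hasDerivAt_x x t
    have Xp3 := hp3.hasDerivAt_x x t
    have Xwx := (hw.pdx_smooth).hasDerivAt_x x t
    have Xux := (hu.pdx_smooth).hasDerivAt_x x t
    have Xvx := (hv.pdx_smooth).hasDerivAt_x x t
    have m1 := dB_mixed1 hw hu hsol
    have m2 := dB_mixed2 hw hu hv hsol
    have m3 := dB_mixed3 hw hu hv hsol
    have hL := ((((Tp3.const_mul (-20:ℝ)).mul Tux).sub ((Tp2.const_mul 12).mul ((Twx.mul Tw).add Tvx))).add ((Tp1.const_mul 6).mul ((Twx.mul Tu).add (Tux.mul Tw)))).add ((Tu.const_mul 8).mul ((Tv.const_mul 3).add (Tw.pow 2)))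
    have hRw := ((((((Xp3.const_mul (-20:ℝ)).mul Xwx).sub ((Xp2.const_mul 12).mul Xux)).sub ((Xp1.const_mul 6).mul (((Xwx.const_mul 2).mul Xw).add Xvx))).add ((Xu.pow 2).const_mul 9)).add ((Xv.const_mul 16).mul Xw)).add ((Xw.pow 3).const_mul 16)
    have hRv := ((((((Xp3.const_mul (-20:ℝ)).mul Xvx).add ((Xp2.const_mul 12).mul ((Xwx.mul Xu).add ((Xux.const_mul 3).mul Xw)))).add ((Xp1.const_mul 6).mul ((((Xwx.const_mul 3).mul (Xw.pow 2)).add (Xux.mul Xu)).add ((Xvx.const_mul 2).mul Xw)))).sub (((Xu.pow 2).const_mul 39).mul Xw)).add ((Xv.pow 2).const_mul 16)).sub ((Xw.pow 4).const_mul 12)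
    refine (pdt_of_hasDerivAt (x := x) hL).trans ?_
    rw [pdx_of_hasDerivAt (g := (fun x t => -20 * p3 x t * pdx w x t - 12 * p2 x t * pdx u x t - 6 * p1 x t * (2 * pdx w x t * w x t + pdx v x t) + 9 * (u x t) ^ 2 + 16 * v x t * w x t + 16 * (w x t) ^ 3)) hRw,
      pdx_of_hasDerivAt (g := (fun x t => -20 * p3 x t * pdx v x t + 12 * p2 x t * (pdx w x t * u x t + 3 * pdx u x t * w x t) + 6 * p1 x t * (3 * pdx w x t * (w x t) ^ 2 + pdx u x t * u x t + 2 * pdx v x t * w x t) - 39 * (u x t) ^ 2 * w x t + 16 * (v x t) ^ 2 - 12 * (w x t) ^ 4)) hRv]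
    beta_reduce
    simp only [Pi.add_apply, Pi.sub_apply, Pi.mul_apply, Pi.pow_apply, Pi.neg_apply]
    simp only [m1, m2, m3, hsol.1, hsol.2.1, hsol.2.2, hp1t, hp2t, hp3t, hp1x, hp2x, hp3x]
    push_cast
    ring
  · -- equation 3
    have Tw := hw.hasDerivAt_t x t
    have Tu := hu.hasDerivAt_t x t
    have Tv := hv.hasDerivAt_t x t
    have Tp1 := hp1.hasDerivAt_t x t
    have Tp2 := hp2.hasDerivAt_t x t
    have Tp3 := hp3.hasDerivAt_t x t
    have Twx := (hw.pdx_smooth).hasDerivAt_t x t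
    have Tux := (hu.pdx_smooth).hasDerivAt_t x t
    have Tvx := (hv.pdx_smooth).hasDerivAt_t x t
    have Xw := hw.hasDerivAt_x x t
    have Xu := hu.hasDerivAt_x x t
    have Xv := hv.hasDerivAt_x x t
    have Xp1 := hp1.hasDerivAt_x x t
    have Xp2 := hp2.hasDerivAt_x x t
    have Xp3 := hp3.hasDerivAt_x x t
    have Xwx := (hw.pdx_smooth).hasDerivAt_x x t
    have Xux := (hu.pdx_smooth).hasDerivAt_x x t
    have Xvx := (hv.pdx_smooth).hasDerivAt_x x t
    have m1 := dB_mixed1 hw hu hsol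
    have m2 := dB_mixed2 hw hu hv hsol
    have m3 := dB_mixed3 hw hu hv hsol
    have hL := ((((((Tp3.const_mul (-20:ℝ)).mul Tvx).add ((Tp2.const_mul 12).mul ((Twx.mul Tu).add ((Tux.const_mul 3).mul Tw)))).add ((Tp1.const_mul 6).mul ((((Twx.const_mul 3).mul (Tw.pow 2)).add (Tux.mul Tu)).add ((Tvx.const_mul 2).mul Tw)))).sub (((Tu.pow 2).const_mul 39).mul Tw)).add ((Tv.pow 2).const_mul 16)).sub ((Tw.pow 4).const_mul 12)
    have hRw := ((((((Xp3.const_mul (-20:ℝ)).mul Xwx).sub ((Xp2.const_mul 12).mul Xux)).sub ((Xp1.const_mul 6).mul (((Xwx.const_mul 2).mul Xw).add Xvx))).add ((Xu.pow 2).const_mul 9)).add ((Xv.const_mul 16).mul Xw)).add ((Xw.pow 3).const_mul 16)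
    have hRu := ((((Xp3.const_mul (-20:ℝ)).mul Xux).sub ((Xp2.const_mul 12).mul ((Xwx.mul Xw).add Xvx))).add ((Xp1.const_mul 6).mul ((Xwx.mul Xu).add (Xux.mul Xw)))).add ((Xu.const_mul 8).mul ((Xv.const_mul 3).add (Xw.pow 2)))
    refine (pdt_of_hasDerivAt (x := x) hL).trans ?_
    rw [pdx_of_hasDerivAt (g := (fun x t => -20 * p3 x t * pdx w x t - 12 * p2 x t * pdx u x t - 6 * p1 x t * (2 * pdx w x t * w x t + pdx v x t) + 9 * (u x t) ^ 2 + 16 * v x t * w x t + 16 * (w x t) ^ 3)) hRw,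
      pdx_of_hasDerivAt (g := (fun x t => -20 * p3 x t * pdx u x t - 12 * p2 x t * (pdx w x t * w x t + pdx v x t) + 6 * p1 x t * (pdx w x t * u x t + pdx u x t * w x t) + 8 * u x t * (3 * v x t + (w x t) ^ 2))) hRu]
    beta_reduce
    simp only [Pi.add_apply, Pi.sub_apply, Pi.mul_apply, Pi.pow_apply, Pi.neg_apply]
    simp only [m1, m2, m3, hsol.1, hsol.2.1, hsol.2.2, hp1t, hp2t, hp3t, hp1x, hp2x, hp3x]
    push_cast
    ring
end
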